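/- arXiv:1410.2537 — 2 statements merged into one kernel-verified Lean document; each statement's English description precedes it below -/
import Mathlib

section
/- Let ⟨T_s⟩_{s ∈ 2^{<ω}} be a full splitting system over a perfect-tree forcing notion P. Then for every s ∈ 2^{<ω}, T̄(s) is a perfect tree, and [T̄(s)] = ⋂_{n ≥ |s|} ⋃ {[T_t] : t ∈ 2ⁿ, s ⊑ t}. -/
/-- A tree: a set of finite binary strings closed under initial segments. -/
def IsTree (T : Set (List Bool)) : Prop :=
  ∀ s t : List Bool, s <+: t → t ∈ T → s ∈ T

/-- A perfect tree: a nonempty tree in which every node has a splitting extension. -/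
def IsPerfectTree (T : Set (List Bool)) : Prop :=
  T.Nonempty ∧ IsTree T ∧
    ∀ s ∈ T, ∃ t ∈ T, s <+: t ∧ t ++ [false] ∈ T ∧ t ++ [true] ∈ T

/-- T↾u = {t ∈ T : u ⊑ t or t ⊑ u}. -/
def restr (T : Set (List Bool)) (u : List Bool) : Set (List Bool) :=
  {t | t ∈ T ∧ (u <+: t ∨ t <+: u)}

/-- [T]: the set of paths through T, as a subset of Cantor space 2^ω = ℕ → Bool. -/
def paths (T : Set (List Bool)) : Set (ℕ → Bool) :=
  {a | ∀ n : ℕ, (List.ofFn fun i : Fin n => a i) ∈ T}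

/-- s is the stem (root) of T: the ⊑-largest string s ∈ T with T = T↾s. -/
def IsStem (T : Set (List Bool)) (s : List Bool) : Prop :=
  s ∈ T ∧ T = restr T s ∧ ∀ t ∈ T, T = restr T t → t <+: s

/-- The stem of a tree (well-defined and equal to the root for perfect trees). -/
noncomputable def stem (T : Set (List Bool)) : List Bool :=
  haveI := Classical.dec (∃ s, IsStem T s)
  if h : ∃ s, IsStem T s then h.choose else []

/-- A perfect-tree forcing notion: a set of perfect trees closed under T ↦ T↾u, u ∈ T. -/
def IsPTF (P : Set (Set (List Bool))) : Prop :=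
  (∀ T ∈ P, IsPerfectTree T) ∧ ∀ T ∈ P, ∀ u ∈ T, restr T u ∈ P

/-- A finite splitting system over P of height n, given as ⟨φ s⟩ for strings of length < n. -/
def FinSplitSys (P : Set (Set (List Bool))) (n : ℕ)
    (φ : List Bool → Set (List Bool)) : Prop :=
  (∀ s : List Bool, s.length < n → φ s ∈ P) ∧
  ∀ (s : List Bool) (i : Bool), s.length + 1 < n →
    φ (s ++ [i]) ⊆ φ s ∧ stem (φ s) ++ [i] <+: stem (φ (s ++ [i]))

/-- A full splitting system over P, indexed by all of 2^{<ω}. -/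
def FullSplitSys (P : Set (Set (List Bool)))
    (φ : List Bool → Set (List Bool)) : Prop :=
  (∀ s : List Bool, φ s ∈ P) ∧
  ∀ (s : List Bool) (i : Bool),
    φ (s ++ [i]) ⊆ φ s ∧ stem (φ s) ++ [i] <+: stem (φ (s ++ [i]))

/-- T̄(s) = ⋂_{n ≥ |s|} ⋃ {φ t : t ∈ 2ⁿ, s ⊑ t}. -/
def Tbar (φ : List Bool → Set (List Bool)) (s : List Bool) : Set (List Bool) :=
  ⋂ n ∈ {n : ℕ | s.length ≤ n},
    ⋃ t ∈ {t : List Bool | t.length = n ∧ s <+: t}, φ t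

/-!
`T̄(s)` is a tree, being an intersection of unions of trees. The roots `root(T_t)` with `s ⊑ t`
lie in `T̄(s)` and split there, and every node `x` of `T̄(s)` lies below one of them, since the
roots grow at least as fast as the index. For the paths, each level of the intersection is a
union of finitely many trees, and a path through a finite union of trees is a path through one
of them.
-/

lemma List.prefix_of_prefix_or_prefix_of_length_le {α : Type*} {t u : List α}
    (h : u <+: t ∨ t <+: u) (hlen : t.length ≤ u.length) : t <+: u := by
  rcases h with h | h
  · rw [h.eq_of_length (le_antisymm h.length_le hlen)]
  · exact h

lemma List.ofFn_prefix_ofFn {α : Type*} (x : ℕ → α) {m m' : ℕ} (h : m ≤ m') :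
    (List.ofFn fun i : Fin m => x i) <+: (List.ofFn fun i : Fin m' => x i) := by
  rw [List.prefix_iff_eq_take]
  apply List.ext_getElem <;> simp [h]

lemma IsStem.prefix_of_mem {T : Set (List Bool)} {σ x : List Bool} (hσ : IsStem T σ)
    (hx : x ∈ T) (hlen : x.length ≤ σ.length) : x <+: σ := by
  rw [hσ.2.1] at hx
  exact List.prefix_of_prefix_or_prefix_of_length_le hx.2 hlen

/-- Every node comparable with all of `T` is comparable with both children of a splitting node
`t₀`, hence has length at most `|t₀|`; the stem is such a node of maximal length. -/
lemma IsPerfectTree.exists_isStem {T : Set (List Bool)} (hT : IsPerfectTree T) :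
    ∃ σ, IsStem T σ := by
  obtain ⟨⟨a, ha⟩, htree, hsplit⟩ := hT
  have hnil : [] ∈ T := htree [] a List.nil_prefix ha
  obtain ⟨t₀, -, -, h0, h1⟩ := hsplit [] hnil
  set A : Set (List Bool) := {u | u ∈ T ∧ T = restr T u}
  have hnilA : [] ∈ A := ⟨hnil, by ext t; simp [restr]⟩
  have hbound : A ⊆ {u | u.length ≤ t₀.length} := by
    rintro u ⟨-, hres⟩
    by_contra! hlong
    have hchild : ∀ i : Bool, t₀ ++ [i] <+: u := fun i => by
      have hmem : t₀ ++ [i] ∈ restr T u := by rw [← hres]; cases i <;> assumption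
      exact List.prefix_of_prefix_or_prefix_of_length_le hmem.2 (by simpa using hlong)
    simpa using List.prefix_of_prefix_length_le (hchild false) (hchild true) (by simp)
  obtain ⟨σ, ⟨hσT, hσres⟩, hσmax⟩ :=
    Set.exists_max_image A List.length ((List.finite_length_le Bool _).subset hbound) ⟨_, hnilA⟩
  refine ⟨σ, hσT, hσres, fun t htT htres => ?_⟩
  have hcomp : t ∈ restr T σ := by rwa [← hσres]
  exact List.prefix_of_prefix_or_prefix_of_length_le hcomp.2 (hσmax t ⟨htT, htres⟩)

lemma IsPerfectTree.isStem_stem {T : Set (List Bool)} (hT : IsPerfectTree T) :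
    IsStem T (stem T) := by
  have h := hT.exists_isStem
  rw [stem, dif_pos h]
  exact h.choose_spec

lemma IsTree.ofFn_mem_of_le {T : Set (List Bool)} (hT : IsTree T) (x : ℕ → Bool) {m m' : ℕ}
    (h : m ≤ m') (hm' : (List.ofFn fun i : Fin m' => x i) ∈ T) :
    (List.ofFn fun i : Fin m => x i) ∈ T :=
  hT _ _ (List.ofFn_prefix_ofFn x h) hm'

lemma paths_biInter {ι : Type*} (N : Set ι) (A : ι → Set (List Bool)) :
    paths (⋂ n ∈ N, A n) = ⋂ n ∈ N, paths (A n) := by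
  ext x
  simp only [paths, Set.mem_iInter, Set.mem_ofPred_eq]
  exact ⟨fun h n hn m => h m n hn, fun h m n hn => h n hn m⟩

lemma paths_biUnion_of_finite {ι : Type*} {S : Set ι} (hS : S.Finite) {T : ι → Set (List Bool)}
    (hT : ∀ i ∈ S, IsTree (T i)) : paths (⋃ i ∈ S, T i) = ⋃ i ∈ S, paths (T i) := by
  ext x
  simp only [paths, Set.mem_iUnion, Set.mem_ofPred_eq]
  refine ⟨fun hx => ?_, fun ⟨i, hi, hx⟩ m => ⟨i, hi, hx m⟩⟩
  by_contra! hcon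
  choose! m hm using hcon
  obtain ⟨M, hM⟩ := (hS.image m).bddAbove
  obtain ⟨i, hi, hxi⟩ := hx M
  exact hm i hi ((hT i hi).ofFn_mem_of_le x (hM ⟨i, hi, rfl⟩) hxi)

lemma mem_Tbar {φ : List Bool → Set (List Bool)} {s x : List Bool} :
    x ∈ Tbar φ s ↔ ∀ n, s.length ≤ n → ∃ t, (t.length = n ∧ s <+: t) ∧ x ∈ φ t := by
  simp [Tbar]

lemma isTree_Tbar {φ : List Bool → Set (List Bool)} (hφ : ∀ t, IsTree (φ t)) (s : List Bool) :
    IsTree (Tbar φ s) := by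
  intro a b hab hb
  rw [mem_Tbar] at hb ⊢
  intro n hn
  obtain ⟨t, ht, hbt⟩ := hb n hn
  exact ⟨t, ht, hφ t a b hab hbt⟩

namespace FullSplitSys

variable {P : Set (Set (List Bool))} {φ : List Bool → Set (List Bool)}

lemma isPerfectTree (hP : IsPTF P) (hφ : FullSplitSys P φ) (t : List Bool) :
    IsPerfectTree (φ t) :=
  hP.1 _ (hφ.1 t)

lemma subset_of_prefix (hφ : FullSplitSys P φ) {t u : List Bool} (h : t <+: u) : φ u ⊆ φ t := by
  obtain ⟨w, rfl⟩ := h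
  induction w using List.reverseRecOn with
  | nil => simp
  | append_singleton w i ih =>
    rw [← List.append_assoc]
    exact (hφ.2 _ i).1.trans ih

lemma stem_prefix_stem (hφ : FullSplitSys P φ) {u t : List Bool} (h : u <+: t) :
    stem (φ u) <+: stem (φ t) := by
  obtain ⟨w, rfl⟩ := h
  induction w using List.reverseRecOn with
  | nil => simp
  | append_singleton w i ih =>
    rw [← List.append_assoc]
    exact ih.trans ((List.prefix_append _ _).trans (hφ.2 _ i).2)

lemma length_le_length_stem (hφ : FullSplitSys P φ) (t : List Bool) :
    t.length ≤ (stem (φ t)).length := by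
  induction t using List.reverseRecOn with
  | nil => simp
  | append_singleton t i ih =>
    have := (hφ.2 t i).2.length_le
    simp only [List.length_append, List.length_singleton] at this ⊢
    omega

lemma stem_mem_of_prefix (hP : IsPTF P) (hφ : FullSplitSys P φ) {u t : List Bool}
    (h : u <+: t ∨ t <+: u) : stem (φ u) ∈ φ t := by
  rcases h with h | h
  · exact (hφ.isPerfectTree hP t).2.1 _ _ (hφ.stem_prefix_stem h)
      ((hφ.isPerfectTree hP t).isStem_stem.1)
  · exact hφ.subset_of_prefix h (hφ.isPerfectTree hP u).isStem_stem.1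

lemma stem_mem_Tbar (hP : IsPTF P) (hφ : FullSplitSys P φ) {s u : List Bool} (h : s <+: u) :
    stem (φ u) ∈ Tbar φ s := by
  rw [mem_Tbar]
  intro n hn
  by_cases hnu : n ≤ u.length
  · exact ⟨u.take n, ⟨by simp [hnu], List.prefix_take_iff.2 ⟨h, hn⟩⟩,
      hφ.stem_mem_of_prefix hP (.inr (List.take_prefix n u))⟩
  · exact ⟨u ++ List.replicate (n - u.length) false, ⟨by simp; omega,
      h.trans (List.prefix_append _ _)⟩, hφ.stem_mem_of_prefix hP (.inl (List.prefix_append _ _))⟩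

lemma isPerfectTree_Tbar (hP : IsPTF P) (hφ : FullSplitSys P φ) (s : List Bool) :
    IsPerfectTree (Tbar φ s) := by
  have htree := isTree_Tbar (fun t => (hφ.isPerfectTree hP t).2.1) s
  refine ⟨⟨_, hφ.stem_mem_Tbar hP (List.prefix_refl s)⟩, htree, fun x hx => ?_⟩
  obtain ⟨t, ⟨htlen, hst⟩, hxt⟩ := mem_Tbar.1 hx (s.length + x.length) (by omega)
  have hxσ : x <+: stem (φ t) :=
    (hφ.isPerfectTree hP t).isStem_stem.prefix_of_mem hxt
      (by have := hφ.length_le_length_stem t; omega)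
  have hchild : ∀ i, stem (φ t) ++ [i] ∈ Tbar φ s := fun i =>
    htree _ _ (hφ.2 t i).2 (hφ.stem_mem_Tbar hP (hst.trans (List.prefix_append _ _)))
  exact ⟨_, hφ.stem_mem_Tbar hP hst, hxσ, hchild false, hchild true⟩

lemma paths_Tbar (hP : IsPTF P) (hφ : FullSplitSys P φ) (s : List Bool) :
    paths (Tbar φ s) =
      ⋂ n ∈ {n : ℕ | s.length ≤ n},
        ⋃ t ∈ {t : List Bool | t.length = n ∧ s <+: t}, paths (φ t) := by
  rw [Tbar, paths_biInter]
  refine Set.iInter₂_congr fun n _ => paths_biUnion_of_finite ?_ fun t _ =>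
    (hφ.isPerfectTree hP t).2.1
  exact (List.finite_length_eq Bool n).subset fun t ht => ht.1

end FullSplitSys

/-- For a full splitting system ⟨T_s⟩ over P, every T̄(s) is a perfect
tree and [T̄(s)] = ⋂_{n ≥ |s|} ⋃ {[T_t] : t ∈ 2ⁿ, s ⊑ t}. -/
theorem stmt_12 (P : Set (Set (List Bool))) (hP : IsPTF P)
    (φ : List Bool → Set (List Bool)) (hφ : FullSplitSys P φ) (s : List Bool) :
    IsPerfectTree (Tbar φ s) ∧
    paths (Tbar φ s) =
      ⋂ n ∈ {n : ℕ | s.length ≤ n},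
        ⋃ t ∈ {t : List Bool | t.length = n ∧ s <+: t}, paths (φ t) := by
  exact ⟨hφ.isPerfectTree_Tbar hP s, hφ.paths_Tbar hP s⟩
end

section
/- Let P be a perfect-tree forcing notion and D ⊆ P a pre-dense subset of P. If ψ is a finite splitting system over P of height n ≥ 1, then there exists a finite splitting system φ over P which reduces ψ and such that for every s ∈ 2^{n-1} there is a tree S ∈ D with φ(s) ⊆ S. -/
/-!
Only the top layer of ψ changes: for each s ∈ 2^{n-1}, pre-density yields T' ∈ P lying both
in ψ(s) and in some S ∈ D, and ψ(s) is replaced by T'. The splitting conditions survive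
because shrinking a perfect tree can only lengthen its stem: the old stem is comparable with
every node of the smaller tree, and a string comparable with all nodes of a perfect tree is a
prefix of its stem.
-/

lemma eq_restr_iff {T : Set (List Bool)} {u : List Bool} :
    T = restr T u ↔ ∀ t ∈ T, u <+: t ∨ t <+: u := by
  refine ⟨fun h t ht => (h ▸ ht).2, fun h => ?_⟩
  ext t
  exact ⟨fun ht => ⟨ht, h t ht⟩, fun ht => ht.1⟩

lemma prefix_of_forall_comparable_of_split {T : Set (List Bool)} {u t : List Bool}
    (h0 : t ++ [false] ∈ T) (h1 : t ++ [true] ∈ T)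
    (h : ∀ x ∈ T, u <+: x ∨ x <+: u) : u <+: t := by
  rcases h _ h0 with hf | hf
  · rcases List.prefix_concat_iff.mp hf with rfl | hu
    · rcases h _ h1 with h' | h' <;> simp at h'
    · exact hu
  · rcases h _ h1 with h' | h'
    · simpa using hf.trans h'
    · rcases List.prefix_or_prefix_of_prefix hf h' with h'' | h'' <;> simp at h''

namespace IsPerfectTree

variable {T : Set (List Bool)}

theorem exists_isStem_s13 (hT : IsPerfectTree T) : ∃ s, IsStem T s := by
  classical
  obtain ⟨⟨x, hx⟩, htree, hsplit⟩ := hT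
  obtain ⟨t, -, -, h0, h1⟩ := hsplit x hx
  -- every candidate stem is a prefix of the splitting node `t`, so the longest one is the stem
  let Q k := t.take k ∈ T ∧ T = restr T (t.take k)
  have hQ0 : Q 0 :=
    ⟨htree [] x List.nil_prefix hx, eq_restr_iff.mpr fun _ _ => .inl List.nil_prefix⟩
  obtain ⟨hmT, hm⟩ := Nat.findGreatest_spec (P := Q) (Nat.zero_le t.length) hQ0
  refine ⟨_, hmT, hm, fun u huT hu => ?_⟩
  have hut : u <+: t := prefix_of_forall_comparable_of_split h0 h1 (eq_restr_iff.mp hu)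
  have hu_eq : t.take u.length = u := (List.prefix_iff_eq_take.mp hut).symm
  have hle : u.length ≤ Nat.findGreatest Q t.length :=
    Nat.le_findGreatest hut.length_le (by simp only [Q, hu_eq]; exact ⟨huT, hu⟩)
  rw [← hu_eq]
  exact List.prefix_of_prefix_length_le (List.take_prefix _ _) (List.take_prefix _ _)
    (by simp only [List.length_take]; omega)

theorem isStem_stem_s13 (hT : IsPerfectTree T) : IsStem T (stem T) := by
  have h := hT.exists_isStem_s13
  rw [stem, dif_pos h]
  exact h.choose_spec

theorem exists_mem_le_length (hT : IsPerfectTree T) (k : ℕ) : ∃ x ∈ T, k ≤ x.length := by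
  induction k with
  | zero => obtain ⟨x, hx⟩ := hT.1; exact ⟨x, hx, Nat.zero_le _⟩
  | succ k ih =>
    obtain ⟨x, hx, hk⟩ := ih
    obtain ⟨t, -, hxt, h0, -⟩ := hT.2.2 x hx
    exact ⟨t ++ [false], h0, by simpa using hk.trans hxt.length_le⟩

theorem stem_prefix_stem_of_subset {S : Set (List Bool)} (hS : IsPerfectTree S)
    (hT : IsPerfectTree T) (hST : S ⊆ T) : stem T <+: stem S := by
  obtain ⟨-, hTeq, -⟩ := hT.isStem_stem_s13
  obtain ⟨-, -, hSmax⟩ := hS.isStem_stem_s13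
  have hcomp : ∀ x ∈ S, stem T <+: x ∨ x <+: stem T :=
    fun x hx => eq_restr_iff.mp hTeq x (hST hx)
  obtain ⟨x, hxS, hxlen⟩ := hS.exists_mem_le_length (stem T).length
  have hstemS : stem T ∈ S := by
    rcases hcomp x hxS with h | h
    · exact hS.2.1 _ _ h hxS
    · rwa [← h.eq_of_length_le hxlen]
  exact hSmax _ hstemS (eq_restr_iff.mpr hcomp)

end IsPerfectTree

theorem FinSplitSys.shrink_top {P : Set (Set (List Bool))}
    (hP : ∀ T ∈ P, IsPerfectTree T) {n : ℕ} {ψ θ : List Bool → Set (List Bool)}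
    (hψ : FinSplitSys P n ψ) (hθP : ∀ s, s.length + 1 = n → θ s ∈ P)
    (hθψ : ∀ s, s.length + 1 = n → θ s ⊆ ψ s) :
    FinSplitSys P n (fun s => if s.length + 1 = n then θ s else ψ s) := by
  refine ⟨fun s hs => ?_, fun s i hs => ?_⟩ <;> dsimp only
  · split_ifs with h
    · exact hθP s h
    · exact hψ.1 s hs
  · have hs' : s.length + 1 ≠ n := by omega
    simp only [hs', if_false]
    split_ifs with h
    · have hθ := hθψ _ h
      refine ⟨hθ.trans (hψ.2 s i hs).1, (hψ.2 s i hs).2.trans ?_⟩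
      exact (hP _ (hθP _ h)).stem_prefix_stem_of_subset (hP _ (hψ.1 _ (by omega))) hθ
    · exact hψ.2 s i hs

theorem stmt_13_general (P : Set (Set (List Bool))) (hP : IsPTF P)
    (D : Set (Set (List Bool)))
    (hpre : ∀ T ∈ P, ∃ S ∈ D, ∃ T' ∈ P, T' ⊆ T ∧ T' ⊆ S)
    (n : ℕ)
    (ψ : List Bool → Set (List Bool)) (hψ : FinSplitSys P n ψ) :
    ∃ φ : List Bool → Set (List Bool),
      FinSplitSys P n φ ∧
      (∀ s : List Bool, s.length + 1 = n → φ s ⊆ ψ s) ∧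
      (∀ s : List Bool, s.length + 1 < n → φ s = ψ s) ∧
      (∀ s : List Bool, s.length + 1 = n → ∃ S ∈ D, φ s ⊆ S) := by
  have hshrink : ∀ s : List Bool, s.length + 1 = n →
      ∃ T' ∈ P, T' ⊆ ψ s ∧ ∃ S ∈ D, T' ⊆ S := by
    intro s hs
    obtain ⟨S, hSD, T', hT'P, hT'ψ, hT'S⟩ := hpre (ψ s) (hψ.1 s (by omega))
    exact ⟨T', hT'P, hT'ψ, S, hSD, hT'S⟩
  choose! θ hθP hθψ hθD using hshrink
  refine ⟨_, hψ.shrink_top hP.1 hθP hθψ, fun s hs => ?_, fun s hs => ?_, fun s hs => ?_⟩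
  · simpa [hs] using hθψ s hs
  · simp [hs.ne]
  · simpa [hs] using hθD s hs

/-- If D ⊆ P is pre-dense in P and ψ is a finite splitting system over P
of height n ≥ 1, then there is a finite splitting system φ over P which reduces ψ such
that each top-layer tree φ(s), s ∈ 2^{n-1}, is contained in some member of D. -/
theorem stmt_13 (P : Set (Set (List Bool))) (hP : IsPTF P)
    (D : Set (Set (List Bool))) (hD : D ⊆ P)
    (hpre : ∀ T ∈ P, ∃ S ∈ D, ∃ T' ∈ P, T' ⊆ T ∧ T' ⊆ S)
    (n : ℕ) (hn : 1 ≤ n)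
    (ψ : List Bool → Set (List Bool)) (hψ : FinSplitSys P n ψ) :
    ∃ φ : List Bool → Set (List Bool),
      FinSplitSys P n φ ∧
      (∀ s : List Bool, s.length + 1 = n → φ s ⊆ ψ s) ∧
      (∀ s : List Bool, s.length + 1 < n → φ s = ψ s) ∧
      (∀ s : List Bool, s.length + 1 = n → ∃ S ∈ D, φ s ⊆ S) :=
  stmt_13_general P hP D hpre n ψ hψ
end
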